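/- arXiv:1111.6807 — 4 statements merged into one kernel-verified Lean document; each statement's English description precedes it below -/
import Mathlib

section
/- Let f(x) = 1/(x log b) · 1_{(1,b)}(x) with b > 1. Then the self-convolution g = f * f satisfies g(x) = (2/(x log² b)) · log(x−1) for 2 < x < b+1, and g(x) = (2/(x log² b)) · log(b/(x−b)) for b+1 < x < 2b, and g(x) = 0 for x outside (2, 2b). -/
open MeasureTheory Real Set

/-! Both factors of `f (x - y) * f y` are nonzero exactly when `y` lies in
`(max 1 (x - b), min b (x - 1))`, an interval that is empty unless `2 < x < 2b`. On it the
integrand is `1 / ((x - y) y log² b)`, which is integrated by the partial fractions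
`1 / ((x - y) y) = (1 / y + 1 / (x - y)) / x`. -/

lemma indicator_Ioo_sub_mul_indicator_Ioo {M : Type*} [MulZeroClass M] (a b x y : ℝ) (h : ℝ → M) :
    (Ioo a b).indicator h (x - y) * (Ioo a b).indicator h y =
      (Ioo (max a (x - b)) (min b (x - a))).indicator (fun y => h (x - y) * h y) y := by
  have hmem : y ∈ Ioo (max a (x - b)) (min b (x - a)) ↔ x - y ∈ Ioo a b ∧ y ∈ Ioo a b := by
    simp only [mem_Ioo, max_lt_iff, lt_min_iff]
    constructor <;> intro <;> refine ⟨⟨?_, ?_⟩, ?_, ?_⟩ <;> linarith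
  simp only [indicator_apply, hmem, ite_and]
  split_ifs <;> simp

lemma integral_indicator_Ioo_sub_mul_indicator_Ioo {E : Type*} [NormedRing E] [NormedSpace ℝ E]
    (a b x : ℝ) (h : ℝ → E) :
    ∫ y, (Ioo a b).indicator h (x - y) * (Ioo a b).indicator h y =
      ∫ y in Ioo (max a (x - b)) (min b (x - a)), h (x - y) * h y := by
  simp_rw [indicator_Ioo_sub_mul_indicator_Ioo]
  exact integral_indicator measurableSet_Ioo

lemma integral_inv_sub_mul_self {l u x : ℝ} (hl : 0 < l) (hlu : l ≤ u) (hux : u < x) :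
    ∫ y in Ioo l u, ((x - y) * y)⁻¹ = (log (u / l) + log ((x - l) / (x - u))) / x := by
  have hx : 0 < x := by linarith
  rw [← integral_Ioc_eq_integral_Ioo, ← intervalIntegral.integral_of_le hlu]
  have hpos : ∀ y ∈ uIcc l u, 0 < y ∧ 0 < x - y := fun y hy => by
    rw [uIcc_of_le hlu] at hy
    exact ⟨by linarith [hy.1], by linarith [hy.2]⟩
  have hsplit : ∀ y ∈ uIcc l u, ((x - y) * y)⁻¹ = x⁻¹ * (y⁻¹ + (x - y)⁻¹) := fun y hy => by
    obtain ⟨hy, hxy⟩ := hpos y hy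
    field_simp
    ring
  have hint_inv : IntervalIntegrable (fun y => y⁻¹) volume l u :=
    intervalIntegral.intervalIntegrable_inv (fun y hy => (hpos y hy).1.ne') continuousOn_id
  have hint_inv_sub : IntervalIntegrable (fun y => (x - y)⁻¹) volume l u :=
    intervalIntegral.intervalIntegrable_inv (fun y hy => (hpos y hy).2.ne') (by fun_prop)
  rw [intervalIntegral.integral_congr hsplit, intervalIntegral.integral_const_mul,
    intervalIntegral.integral_add hint_inv hint_inv_sub, integral_inv_of_pos hl (by linarith),
    intervalIntegral.integral_comp_sub_left (fun y => y⁻¹) x,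
    integral_inv_of_pos (by linarith) (by linarith)]
  field_simp

theorem stmt_2_general (b : ℝ)
    (f : ℝ → ℝ)
    (hf : f = fun x => if 1 < x ∧ x < b then 1 / (x * Real.log b) else 0)
    (g : ℝ → ℝ) (hg : g = fun x => ∫ y, f (x - y) * f y) :
    (∀ x, 2 < x → x < b + 1 → g x = 2 / (x * (Real.log b) ^ 2) * Real.log (x - 1)) ∧
    (∀ x, b + 1 < x → x < 2 * b → g x = 2 / (x * (Real.log b) ^ 2) * Real.log (b / (x - b))) ∧
    (∀ x, x ∉ Set.Ioo 2 (2 * b) → g x = 0) := by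
  have hf_indicator : f = (Ioo 1 b).indicator fun x => 1 / (x * log b) := by
    rw [hf]
    ext x
    simp only [indicator_apply, mem_Ioo]
  have hg_integral : ∀ x, g x =
      (log b ^ 2)⁻¹ * ∫ y in Ioo (max 1 (x - b)) (min b (x - 1)), ((x - y) * y)⁻¹ := by
    intro x
    simp only [hg, hf_indicator]
    rw [integral_indicator_Ioo_sub_mul_indicator_Ioo, ← integral_const_mul]
    congr with y
    simp only [one_div, mul_inv, sq]
    ring
  refine ⟨fun x hx2 hxb => ?_, fun x hxb hx2 => ?_, fun x hx => ?_⟩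
  · rw [hg_integral, max_eq_left (by linarith), min_eq_right (by linarith),
      integral_inv_sub_mul_self one_pos (by linarith) (by linarith), sub_sub_cancel, div_one]
    ring
  · rw [hg_integral, max_eq_right (by linarith), min_eq_left (by linarith),
      integral_inv_sub_mul_self (by linarith) (by linarith) (by linarith), sub_sub_cancel]
    ring
  · have hempty : Ioo (max 1 (x - b)) (min b (x - 1)) = ∅ := by
      refine Ioo_eq_empty (not_lt.mpr ?_)
      rcases le_or_gt x 2 with hx2 | hx2
      · exact (min_le_right _ _).trans (le_max_of_le_left (by linarith))
      · have h2b : 2 * b ≤ x := not_lt.mp fun h => hx ⟨hx2, h⟩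
        exact (min_le_left _ _).trans (le_max_of_le_right (by linarith))
    rw [hg_integral, hempty, Measure.restrict_empty, integral_zero_measure, mul_zero]

/-- Explicit formula for the self-convolution of the truncated Pareto density. -/
theorem stmt_2 (b : ℝ) (hb : 1 < b)
    (f : ℝ → ℝ)
    (hf : f = fun x => if 1 < x ∧ x < b then 1 / (x * Real.log b) else 0)
    (g : ℝ → ℝ) (hg : g = fun x => ∫ y, f (x - y) * f y) :
    (∀ x, 2 < x → x < b + 1 → g x = 2 / (x * (Real.log b) ^ 2) * Real.log (x - 1)) ∧
    (∀ x, b + 1 < x → x < 2 * b → g x = 2 / (x * (Real.log b) ^ 2) * Real.log (b / (x - b))) ∧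
    (∀ x, x ∉ Set.Ioo 2 (2 * b) → g x = 0) :=
  stmt_2_general b f hf g hg
end

section
/- Let f(x) = 1/(x log b) · 1_{(1,b)}(x) with b ≥ e. Then the self-convolution g = f * f satisfies g(x) ≤ 1 for all x ∈ ℝ. -/
open MeasureTheory Real

/-!
The convolution integrand `f (x - y) * f y` is at most `(sup f) * f y`, so `(f * f)(x) ≤ sup f`
for a probability density `f`. Here `sup f = 1 / log b`, which is at most `1` once `b ≥ e`.
-/

theorem integral_mul_le_mul_integral {α : Type*} [MeasurableSpace α] {μ : Measure α}
    {f g : α → ℝ} {M : ℝ} (hg0 : 0 ≤ᵐ[μ] g) (hgM : ∀ᵐ x ∂μ, g x ≤ M) (hf0 : 0 ≤ᵐ[μ] f)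
    (hf : Integrable f μ) :
    ∫ x, g x * f x ∂μ ≤ M * ∫ x, f x ∂μ := by
  rw [← integral_const_mul]
  refine integral_mono_of_nonneg ?_ (hf.const_mul M) ?_
  · filter_upwards [hg0, hf0] with x hgx hfx using mul_nonneg hgx hfx
  · filter_upwards [hgM, hf0] with x hgx hfx using mul_le_mul_of_nonneg_right hgx hfx

noncomputable def truncParetoDensity (b : ℝ) : ℝ → ℝ :=
  (Set.Ioo 1 b).indicator fun x => 1 / (x * log b)

namespace truncParetoDensity

variable {b : ℝ}

theorem eq_ite (b : ℝ) :
    truncParetoDensity b = fun x => if 1 < x ∧ x < b then 1 / (x * log b) else 0 := by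
  ext x
  simp only [truncParetoDensity, Set.indicator_apply, Set.mem_Ioo]

theorem nonneg (hb : 1 < b) (x : ℝ) : 0 ≤ truncParetoDensity b x := by
  have := log_pos hb
  refine Set.indicator_nonneg (fun y hy => ?_) x
  have : 0 < y := one_pos.trans hy.1
  positivity

theorem le_inv_log (hb : 1 < b) (x : ℝ) : truncParetoDensity b x ≤ 1 / log b := by
  have hlog := log_pos hb
  refine Set.indicator_apply_le' (fun hx => ?_) (fun _ => by positivity)
  gcongr
  exact le_mul_of_one_le_left hlog.le hx.1.le

theorem integral_Ioo (hb : 1 < b) : ∫ x in Set.Ioo 1 b, 1 / (x * log b) = 1 := by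
  have hlog := log_pos hb
  simp_rw [one_div, mul_inv, integral_mul_const]
  rw [← integral_Ioc_eq_integral_Ioo, ← intervalIntegral.integral_of_le hb.le,
    integral_inv_of_pos one_pos (one_pos.trans hb), div_one, mul_inv_cancel₀ hlog.ne']

theorem integrable (hb : 1 < b) : Integrable (truncParetoDensity b) := by
  refine (integrable_indicator_iff measurableSet_Ioo).2 ?_
  -- a non-integrable function has Bochner integral `0`, not `1`
  by_contra h
  have := integral_Ioo hb
  rw [integral_undef h] at this
  exact zero_ne_one this

theorem integral (hb : 1 < b) : ∫ x, truncParetoDensity b x = 1 := by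
  rw [truncParetoDensity, integral_indicator measurableSet_Ioo, integral_Ioo hb]

end truncParetoDensity

/-- For `b ≥ e`, the self-convolution of the truncated Pareto density is at most 1. -/
theorem stmt_3 (b : ℝ) (hb : Real.exp 1 ≤ b)
    (f : ℝ → ℝ)
    (hf : f = fun x => if 1 < x ∧ x < b then 1 / (x * Real.log b) else 0)
    (g : ℝ → ℝ) (hg : g = fun x => ∫ y, f (x - y) * f y) :
    ∀ x, g x ≤ 1 := by
  have hb1 : 1 < b := (one_lt_exp_iff.2 one_pos).trans_le hb
  have hlog : 1 ≤ log b := (le_log_iff_exp_le (zero_lt_one.trans hb1)).2 hb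
  rw [← truncParetoDensity.eq_ite] at hf
  subst hf hg
  intro x
  calc ∫ y, truncParetoDensity b (x - y) * truncParetoDensity b y
      ≤ 1 / log b * ∫ y, truncParetoDensity b y :=
        integral_mul_le_mul_integral (.of_forall fun _ => truncParetoDensity.nonneg hb1 _)
          (.of_forall fun _ => truncParetoDensity.le_inv_log hb1 _)
          (.of_forall (truncParetoDensity.nonneg hb1)) (truncParetoDensity.integrable hb1)
    _ = 1 / log b := by rw [truncParetoDensity.integral hb1, mul_one]
    _ ≤ 1 := (div_le_one (zero_lt_one.trans_le hlog)).2 hlog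
end

section
/- For b ≥ e², if X_b and Y_b are independent random variables each with density f(x) = 1/(x log b) · 1_{(1,b)}(x), then the differential entropy satisfies h(X_b + Y_b) > (2/3) log b − log 2. -/
open MeasureTheory Real Set

/-! The density `g = f * f` vanishes outside `(2, 2b)`, and the identity
`1 / (y (x - y)) = (1 / y + 1 / (x - y)) / x` bounds it by `g x ≤ 2 / (x log b)`.
Hence `-g log g ≥ g (log x + log log b - log 2)` pointwise, so
`h(X + Y) ≥ E log (X + Y) + log log b - log 2`. Since `log (X + Y) ≥ max (log X) (log Y)` and
`log X / log b` is uniform on `(0, 1)`, `E log (X + Y) ≥ E max (log X) (log Y) = (2/3) log b`;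
finally `log log b > 0` because `b > e`. -/

theorem integrable_of_bounded_of_eq_zero_off_Ioo {φ : ℝ → ℝ} {a c C : ℝ}
    (hφ : AEStronglyMeasurable φ) (hC : ∀ x, |φ x| ≤ C)
    (hzero : ∀ x ∉ Ioo a c, φ x = 0) : Integrable φ :=
  (IntegrableOn.of_bound measure_Ioo_lt_top hφ.restrict C
    (ae_of_all _ hC)).integrable_of_forall_notMem_eq_zero hzero

theorem mul_log_le_mul_log_of_le {t c : ℝ} (ht : 0 ≤ t) (htc : t ≤ c) :
    t * log t ≤ t * log c := by
  rcases ht.eq_or_lt with rfl | ht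
  · simp
  · exact mul_le_mul_of_nonneg_left (log_le_log ht htc) ht.le

theorem max_log_le_log_add {u y : ℝ} (hu : 0 < u) (hy : 0 < y) :
    max (log u) (log y) ≤ log (u + y) :=
  max_le (log_le_log hu (by linarith)) (log_le_log hy (by linarith))

theorem integral_log_pow_div (n : ℕ) {p q : ℝ} (hp : 0 < p) (hq : 0 < q) :
    ∫ x in p..q, log x ^ n / x = (log q ^ (n + 1) - log p ^ (n + 1)) / (n + 1) := by
  have hpos : ∀ x ∈ uIcc p q, 0 < x := fun x hx => (lt_min hp hq).trans_le hx.1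
  have hderiv : ∀ x ∈ uIcc p q,
      HasDerivAt (fun x => log x ^ (n + 1) / (n + 1)) (log x ^ n / x) x := by
    intro x hx
    refine (((hasDerivAt_log (hpos x hx).ne').pow (n + 1)).div_const _).congr_deriv ?_
    field_simp
    push_cast
    ring
  have hcont : ContinuousOn (fun x => log x ^ n / x) (uIcc p q) :=
    ((continuousOn_log.mono fun x hx => (hpos x hx).ne').pow n).div continuousOn_id
      fun x hx => (hpos x hx).ne'
  rw [intervalIntegral.integral_eq_sub_of_hasDerivAt hderiv hcont.intervalIntegrable, sub_div]

section IteratedIntegral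

variable {f f' w : ℝ → ℝ}

theorem integral_sub_mul_mul_eq (y : ℝ) :
    ∫ x, f (x - y) * f' y * w x = f' y * ∫ u, f u * w (u + y) := by
  simp_rw [mul_right_comm (f _) (f' y)]
  rw [integral_mul_const, mul_comm]
  congr 1
  simpa using integral_sub_right_eq_self (μ := volume) (fun u => f u * w (u + y)) y

theorem integral_integral_sub_mul_eq
    (h : Integrable (fun p : ℝ × ℝ => f (p.1 - p.2) * f' p.2 * w p.1) (volume.prod volume)) :
    ∫ x, (∫ y, f (x - y) * f' y) * w x = ∫ y, f' y * ∫ u, f u * w (u + y) := by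
  simp_rw [← integral_mul_const]
  rw [integral_integral_swap h]
  simp_rw [integral_sub_mul_mul_eq]

theorem MeasureTheory.Integrable.integral_sub_mul
    (h : Integrable (fun p : ℝ × ℝ => f (p.1 - p.2) * f' p.2 * w p.1) (volume.prod volume)) :
    Integrable fun x => (∫ y, f (x - y) * f' y) * w x := by
  simpa only [integral_mul_const] using h.integral_prod_left

theorem MeasureTheory.Integrable.mul_integral_add
    (h : Integrable (fun p : ℝ × ℝ => f (p.1 - p.2) * f' p.2 * w p.1) (volume.prod volume)) :
    Integrable fun y => f' y * ∫ u, f u * w (u + y) := by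
  simpa only [integral_sub_mul_mul_eq] using h.integral_prod_right

end IteratedIntegral

noncomputable def truncPareto (b x : ℝ) : ℝ :=
  if 1 < x ∧ x < b then 1 / (x * log b) else 0

noncomputable def truncParetoConv (b x : ℝ) : ℝ :=
  ∫ y, truncPareto b (x - y) * truncPareto b y

section TruncPareto

variable {b : ℝ}

theorem truncPareto_nonneg (b x : ℝ) : 0 ≤ truncPareto b x := by
  unfold truncPareto
  split_ifs with h
  · have := h.1
    have := log_pos (h.1.trans h.2)
    positivity
  · rfl

theorem truncPareto_eq_zero_of_notMem {x : ℝ} (hx : x ∉ Ioo 1 b) : truncPareto b x = 0 :=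
  if_neg hx

theorem mem_Ioo_of_truncPareto_ne_zero {x : ℝ} (hx : truncPareto b x ≠ 0) : x ∈ Ioo 1 b :=
  not_imp_comm.1 truncPareto_eq_zero_of_notMem hx

theorem truncPareto_mul_le_mul {φ ψ : ℝ → ℝ} (h : ∀ u ∈ Ioo 1 b, φ u ≤ ψ u) (u : ℝ) :
    truncPareto b u * φ u ≤ truncPareto b u * ψ u := by
  by_cases hu : u ∈ Ioo 1 b
  · exact mul_le_mul_of_nonneg_left (h u hu) (truncPareto_nonneg b u)
  · simp [truncPareto_eq_zero_of_notMem hu]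

theorem measurable_truncPareto : Measurable (truncPareto b) :=
  Measurable.ite measurableSet_Ioo (by fun_prop) measurable_const

theorem truncPareto_mul_eq_indicator (ψ : ℝ → ℝ) :
    (fun u => truncPareto b u * ψ u) = (Ioo 1 b).indicator fun u => (log b)⁻¹ * (ψ u / u) := by
  ext u
  by_cases hu : u ∈ Ioo 1 b
  · rw [indicator_of_mem hu, truncPareto, if_pos (mem_Ioo.1 hu)]
    field_simp
  · rw [indicator_of_notMem hu, truncPareto_eq_zero_of_notMem hu, zero_mul]

theorem integral_truncPareto_mul (hb : 1 < b) (ψ : ℝ → ℝ) :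
    ∫ u, truncPareto b u * ψ u = (log b)⁻¹ * ∫ u in 1..b, ψ u / u := by
  rw [truncPareto_mul_eq_indicator, integral_indicator measurableSet_Ioo, integral_const_mul,
    intervalIntegral.integral_of_le hb.le, integral_Ioc_eq_integral_Ioo]

theorem integrable_truncPareto_mul {ψ : ℝ → ℝ} (hψ : ContinuousOn ψ (Icc 1 b)) :
    Integrable fun u => truncPareto b u * ψ u := by
  rw [truncPareto_mul_eq_indicator, integrable_indicator_iff measurableSet_Ioo]
  refine (ContinuousOn.integrableOn_Icc ?_).mono_set Ioo_subset_Icc_self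
  exact continuousOn_const.mul
    (hψ.div continuousOn_id fun u hu => (zero_lt_one.trans_le hu.1).ne')

theorem integrable_truncPareto : Integrable (truncPareto b) := by
  simpa using integrable_truncPareto_mul (b := b) (ψ := 1) continuousOn_const

theorem continuousOn_log_Icc_one : ContinuousOn log (Icc 1 b) :=
  continuousOn_log.mono fun _ hu => (zero_lt_one.trans_le hu.1).ne'

theorem integral_truncPareto_mul_log_pow (hb : 1 < b) (n : ℕ) :
    ∫ u, truncPareto b u * log u ^ n = log b ^ n / (n + 1) := by
  have hL : log b ≠ 0 := (log_pos hb).ne'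
  rw [integral_truncPareto_mul hb, integral_log_pow_div n one_pos (by linarith), log_one,
    zero_pow n.succ_ne_zero, sub_zero, pow_succ]
  field_simp

theorem integral_truncPareto (hb : 1 < b) : ∫ u, truncPareto b u = 1 := by
  simpa using integral_truncPareto_mul_log_pow hb 0

theorem integral_truncPareto_mul_max_log (hb : 1 < b) {y : ℝ} (hy : y ∈ Icc 1 b) :
    ∫ u, truncPareto b u * max (log u) (log y) = log b / 2 + log y ^ 2 / (2 * log b) := by
  have hL : log b ≠ 0 := (log_pos hb).ne'
  have hy0 : 0 < y := zero_lt_one.trans_le hy.1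
  have hint : ∀ p q, 0 < p → 0 < q →
      IntervalIntegrable (fun u => max (log u) (log y) / u) volume p q := by
    intro p q hp hq
    have hpos : ∀ x ∈ uIcc p q, 0 < x := fun x hx => (lt_min hp hq).trans_le hx.1
    refine ContinuousOn.intervalIntegrable ?_
    exact (((continuousOn_log.mono fun x hx => (hpos x hx).ne').sup continuousOn_const).div
      continuousOn_id fun x hx => (hpos x hx).ne')
  have hlow : ∫ u in 1..y, max (log u) (log y) / u = log y * ∫ u in 1..y, log u ^ 0 / u := by
    rw [← intervalIntegral.integral_const_mul]
    refine intervalIntegral.integral_congr fun u hu => ?_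
    rw [uIcc_of_le hy.1] at hu
    simp [max_eq_right (log_le_log (zero_lt_one.trans_le hu.1) hu.2), div_eq_mul_inv]
  have hup : ∫ u in y..b, max (log u) (log y) / u = ∫ u in y..b, log u ^ 1 / u := by
    refine intervalIntegral.integral_congr fun u hu => ?_
    rw [uIcc_of_le hy.2] at hu
    simp [max_eq_left (log_le_log hy0 hu.1)]
  rw [integral_truncPareto_mul hb, ← intervalIntegral.integral_add_adjacent_intervals
    (hint 1 y one_pos hy0) (hint y b hy0 (by linarith)), hlow, hup,
    integral_log_pow_div 0 one_pos hy0, integral_log_pow_div 1 hy0 (by linarith), log_one]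
  field_simp
  ring

theorem integral_truncPareto_mul_half_log_add_sq_div (hb : 1 < b) :
    ∫ y, truncPareto b y * (log b / 2 + log y ^ 2 / (2 * log b)) = 2 / 3 * log b := by
  have hL : log b ≠ 0 := (log_pos hb).ne'
  have hsplit : (fun y => truncPareto b y * (log b / 2 + log y ^ 2 / (2 * log b))) =
      fun y => log b / 2 * (truncPareto b y * log y ^ 0) +
        (2 * log b)⁻¹ * (truncPareto b y * log y ^ 2) := by
    ext y
    ring
  have hint : ∀ n : ℕ, Integrable fun y => truncPareto b y * log y ^ n := fun n =>
    integrable_truncPareto_mul (continuousOn_log_Icc_one.pow n)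
  rw [hsplit, integral_add ((hint 0).const_mul _) ((hint 2).const_mul _), integral_const_mul,
    integral_const_mul, integral_truncPareto_mul_log_pow hb, integral_truncPareto_mul_log_pow hb]
  field_simp
  ring

end TruncPareto

section TruncParetoConv

variable {b : ℝ}

theorem truncParetoConv_nonneg (x : ℝ) : 0 ≤ truncParetoConv b x :=
  integral_nonneg fun _ => mul_nonneg (truncPareto_nonneg _ _) (truncPareto_nonneg _ _)

theorem mem_Ioo_of_truncPareto_sub_mul_ne_zero {x y : ℝ}
    (h : truncPareto b (x - y) * truncPareto b y ≠ 0) : x ∈ Ioo 2 (2 * b) := by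
  obtain ⟨h1, h2⟩ := mem_Ioo_of_truncPareto_ne_zero (left_ne_zero_of_mul h)
  obtain ⟨h3, h4⟩ := mem_Ioo_of_truncPareto_ne_zero (right_ne_zero_of_mul h)
  constructor <;> linarith

theorem truncParetoConv_eq_zero_of_notMem {x : ℝ} (hx : x ∉ Ioo 2 (2 * b)) :
    truncParetoConv b x = 0 :=
  integral_eq_zero_of_ae <| ae_of_all _ fun _ =>
    not_imp_comm.1 mem_Ioo_of_truncPareto_sub_mul_ne_zero hx

theorem measurable_truncParetoConv : Measurable (truncParetoConv b) :=
  ((measurable_truncPareto.comp (measurable_fst.sub measurable_snd)).mul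
    (measurable_truncPareto.comp measurable_snd)).stronglyMeasurable.integral_prod_right'.measurable

-- The partial fraction `1 / (y (x - y)) = (1 / y + 1 / (x - y)) / x`.
theorem truncPareto_sub_mul_le (hb : 1 < b) {x : ℝ} (hx : 0 < x) (y : ℝ) :
    truncPareto b (x - y) * truncPareto b y ≤
      (truncPareto b y + truncPareto b (x - y)) / (x * log b) := by
  have hL := log_pos hb
  by_cases h : truncPareto b (x - y) * truncPareto b y = 0
  · rw [h]
    have := truncPareto_nonneg b y
    have := truncPareto_nonneg b (x - y)
    positivity
  · have hxy := mem_Ioo_of_truncPareto_ne_zero (left_ne_zero_of_mul h)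
    have hy := mem_Ioo_of_truncPareto_ne_zero (right_ne_zero_of_mul h)
    have := hxy.1
    have := hy.1
    refine le_of_eq ?_
    rw [truncPareto, truncPareto, if_pos (mem_Ioo.1 hxy), if_pos (mem_Ioo.1 hy)]
    field_simp
    ring

theorem truncParetoConv_le (hb : 1 < b) {x : ℝ} (hx : 0 < x) :
    truncParetoConv b x ≤ 2 / (x * log b) := by
  have hshift : Integrable fun y => truncPareto b (x - y) :=
    integrable_truncPareto.comp_sub_left x
  calc truncParetoConv b x
      ≤ ∫ y, (truncPareto b y + truncPareto b (x - y)) / (x * log b) :=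
        integral_mono_of_nonneg
          (ae_of_all _ fun _ => mul_nonneg (truncPareto_nonneg _ _) (truncPareto_nonneg _ _))
          ((integrable_truncPareto.add hshift).div_const _)
          (ae_of_all _ (truncPareto_sub_mul_le hb hx))
    _ = 2 / (x * log b) := by
        rw [integral_div, integral_add integrable_truncPareto hshift,
          integral_sub_left_eq_self (truncPareto b) volume x, integral_truncPareto hb,
          one_add_one_eq_two]

theorem truncParetoConv_le_inv_log (hb : 1 < b) (x : ℝ) : truncParetoConv b x ≤ (log b)⁻¹ := by
  have hL := log_pos hb
  by_cases hx : x ∈ Ioo 2 (2 * b)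
  · have hx0 : 0 < x := by linarith [hx.1]
    calc truncParetoConv b x ≤ 2 / (x * log b) := truncParetoConv_le hb hx0
      _ ≤ (log b)⁻¹ := by
        rw [div_le_iff₀ (by positivity), inv_mul_eq_div, le_div_iff₀ hL]
        nlinarith [hx.1]
  · rw [truncParetoConv_eq_zero_of_notMem hx]
    positivity

theorem integrable_truncParetoConv_mul_log_self (hb : 1 < b) :
    Integrable fun x => truncParetoConv b x * log (truncParetoConv b x) := by
  obtain ⟨C, hC⟩ := (isCompact_Icc (a := 0) (b := (log b)⁻¹)).exists_bound_of_continuousOn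
    continuous_mul_log.continuousOn
  refine integrable_of_bounded_of_eq_zero_off_Ioo (a := 2) (c := 2 * b)
    (measurable_truncParetoConv.mul
      (measurable_log.comp measurable_truncParetoConv)).aestronglyMeasurable
    (fun x => hC _ ⟨truncParetoConv_nonneg x, truncParetoConv_le_inv_log hb x⟩) fun x hx => ?_
  simp [truncParetoConv_eq_zero_of_notMem hx]

theorem integrable_truncPareto_sub_mul_mul {w : ℝ → ℝ} (hw : Measurable w) {C : ℝ}
    (hC : ∀ x ∈ Ioo 2 (2 * b), |w x| ≤ C) :
    Integrable (fun p : ℝ × ℝ => truncPareto b (p.1 - p.2) * truncPareto b p.2 * w p.1)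
      (volume.prod volume) := by
  have hconv : Integrable (fun p : ℝ × ℝ => truncPareto b (p.1 - p.2) * truncPareto b p.2)
      (volume.prod volume) := by
    simpa [mul_comm] using integrable_truncPareto.convolution_integrand
      (ContinuousLinearMap.mul ℝ ℝ) integrable_truncPareto
  refine hconv.norm.const_mul C |>.mono' ?_ (ae_of_all _ fun p => ?_)
  · exact (((measurable_truncPareto.comp (measurable_fst.sub measurable_snd)).mul
      (measurable_truncPareto.comp measurable_snd)).mul
        (hw.comp measurable_fst)).aestronglyMeasurable
  · by_cases h : truncPareto b (p.1 - p.2) * truncPareto b p.2 = 0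
    · simp [h]
    · rw [norm_mul, mul_comm C]
      exact mul_le_mul_of_nonneg_left (hC _ (mem_Ioo_of_truncPareto_sub_mul_ne_zero h))
        (norm_nonneg _)

theorem integrable_truncParetoConv : Integrable (truncParetoConv b) := by
  have h := (integrable_truncPareto_sub_mul_mul (b := b) (w := 1) measurable_one (C := 1)
    fun _ _ => by simp).integral_sub_mul
  simp only [Pi.one_apply, mul_one] at h
  exact h

theorem integral_truncParetoConv (hb : 1 < b) : ∫ x, truncParetoConv b x = 1 := by
  have h := integral_integral_sub_mul_eq
    (integrable_truncPareto_sub_mul_mul (b := b) (w := 1) measurable_one (C := 1)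
      fun _ _ => by simp)
  simp only [Pi.one_apply, mul_one] at h
  unfold truncParetoConv
  simp only [h, integral_truncPareto hb, mul_one]

theorem abs_log_le_log_two_mul {x : ℝ} (hx : x ∈ Ioo 2 (2 * b)) : |log x| ≤ log (2 * b) := by
  have := hx.1
  rw [abs_of_nonneg (log_nonneg (by linarith))]
  exact log_le_log (by linarith) hx.2.le

theorem integrable_truncParetoConv_mul_log :
    Integrable fun x => truncParetoConv b x * log x :=
  (integrable_truncPareto_sub_mul_mul measurable_log
    fun _ => abs_log_le_log_two_mul).integral_sub_mul

theorem two_thirds_mul_log_le_integral_truncParetoConv_mul_log (hb : 1 < b) :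
    2 / 3 * log b ≤ ∫ x, truncParetoConv b x * log x := by
  have hprod := integrable_truncPareto_sub_mul_mul (b := b) measurable_log
    fun _ => abs_log_le_log_two_mul
  unfold truncParetoConv
  rw [integral_integral_sub_mul_eq hprod, ← integral_truncPareto_mul_half_log_add_sq_div hb]
  refine integral_mono (integrable_truncPareto_mul ?_) hprod.mul_integral_add
    (truncPareto_mul_le_mul fun y hy => ?_)
  · exact continuousOn_const.add ((continuousOn_log_Icc_one.pow 2).div_const _)
  · have hy0 : 0 < y := zero_lt_one.trans hy.1
    rw [← integral_truncPareto_mul_max_log hb (Ioo_subset_Icc_self hy)]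
    refine integral_mono
      (integrable_truncPareto_mul (continuousOn_log_Icc_one.sup continuousOn_const))
      (integrable_truncPareto_mul ?_) (truncPareto_mul_le_mul fun u hu =>
        max_log_le_log_add (zero_lt_one.trans hu.1) hy0)
    exact continuousOn_log.comp (continuousOn_id.add continuousOn_const) fun u hu => by
      have := hu.1
      simp only [mem_compl_iff, mem_singleton_iff]
      linarith

theorem truncParetoConv_mul_log_add_le (hb : 1 < b) (x : ℝ) :
    truncParetoConv b x * (log x + (log (log b) - log 2)) ≤
      -(truncParetoConv b x * log (truncParetoConv b x)) := by
  by_cases hx : x ∈ Ioo 2 (2 * b)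
  · have hx0 : 0 < x := by linarith [hx.1]
    have hL := log_pos hb
    have h := mul_log_le_mul_log_of_le (truncParetoConv_nonneg x) (truncParetoConv_le hb hx0)
    rw [log_div two_ne_zero (by positivity), log_mul hx0.ne' hL.ne'] at h
    linarith
  · simp [truncParetoConv_eq_zero_of_notMem hx]

end TruncParetoConv

/-- For `b ≥ e²`, the differential entropy of the sum of two independent copies of
a truncated Pareto random variable (whose density is the self-convolution `g = f*f`)
exceeds `(2/3) log b − log 2`. -/
theorem stmt_5 (b : ℝ) (hb : Real.exp 2 ≤ b)
    (f : ℝ → ℝ)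
    (hf : f = fun x => if 1 < x ∧ x < b then 1 / (x * Real.log b) else 0)
    (g : ℝ → ℝ) (hg : g = fun x => ∫ y, f (x - y) * f y) :
    -∫ x, g x * Real.log (g x) > (2 / 3) * Real.log b - Real.log 2 := by
  subst hf hg
  change -∫ x, truncParetoConv b x * log (truncParetoConv b x) > _
  have hb1 : 1 < b := by linarith [add_one_le_exp 2]
  have hlogL : 0 < log (log b) := log_pos (by linarith [(le_log_iff_exp_le (by linarith)).2 hb])
  set c := log (log b) - log 2
  have hlog : Integrable fun x => truncParetoConv b x * log x := integrable_truncParetoConv_mul_log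
  have hc : Integrable fun x => truncParetoConv b x * c := integrable_truncParetoConv.mul_const c
  calc 2 / 3 * log b - log 2
      < (∫ x, truncParetoConv b x * log x) + c := by
        linarith [two_thirds_mul_log_le_integral_truncParetoConv_mul_log hb1]
    _ = ∫ x, truncParetoConv b x * (log x + c) := by
        simp_rw [mul_add]
        rw [integral_add hlog hc, integral_mul_const, integral_truncParetoConv hb1, one_mul]
    _ ≤ -∫ x, truncParetoConv b x * log (truncParetoConv b x) := by
        rw [← integral_neg]
        refine integral_mono ?_ (integrable_truncParetoConv_mul_log_self hb1).neg
          (truncParetoConv_mul_log_add_le hb1)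
        simp_rw [mul_add]
        exact hlog.add hc
end

section
/- For b ≥ e², if X and Y are independent with common density f(x) = 1/(x log b)·1_{(1,b)}(x), then the density h of X − Y satisfies h(x) ≤ min(1, 1/|x|) for all x ≠ 0. -/
open MeasureTheory Real

/-- For `b ≥ e²`, the density of `X − Y` (for i.i.d. truncated Pareto `X, Y`)
is bounded by `min(1, 1/|x|)` for all `x ≠ 0`. -/
theorem stmt_8 (b : ℝ) (hb : Real.exp 2 ≤ b)
    (f : ℝ → ℝ)
    (hf : f = fun x => if 1 < x ∧ x < b then 1 / (x * Real.log b) else 0)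
    (h : ℝ → ℝ) (hh : h = fun x => ∫ y, f (x + y) * f y) :
    ∀ x : ℝ, x ≠ 0 → h x ≤ min 1 (1 / |x|) := by
  have hb0 : (0:ℝ) < b := lt_of_lt_of_le (Real.exp_pos 2) hb
  have hb1 : (1:ℝ) < b := by
    have : (1:ℝ) < Real.exp 2 := by
      have := Real.add_one_le_exp (2:ℝ); linarith
    linarith
  have hlog : (2:ℝ) ≤ Real.log b := (Real.le_log_iff_exp_le hb0).2 hb
  have hlog0 : (0:ℝ) < Real.log b := by linarith
  -- nonnegativity of f
  have hf0 : ∀ t, 0 ≤ f t := by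
    intro t; rw [hf]; dsimp only
    split_ifs with ht
    · have h0 : (0:ℝ) < t := lt_trans one_pos ht.1
      positivity
    · exact le_refl 0
  -- f as indicator
  have hfind : f = (Set.Ioo (1:ℝ) b).indicator (fun x => 1 / (x * Real.log b)) := by
    funext t
    rw [hf]
    by_cases ht : t ∈ Set.Ioo (1:ℝ) b
    · rw [Set.indicator_of_mem ht]; simp [Set.mem_Ioo] at ht; simp [ht]
    · rw [Set.indicator_of_notMem ht]; simp [Set.mem_Ioo] at ht
      by_cases h1 : 1 < t
      · simp [h1, ht h1, not_lt.2 (ht h1)]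
      · simp [h1]
  -- integrability of f
  have hfInt : Integrable f := by
    rw [hfind]
    apply (IntegrableOn.integrable_indicator _ measurableSet_Ioo)
    have hcont : ContinuousOn (fun x : ℝ => 1 / (x * Real.log b)) (Set.Icc 1 b) := by
      apply ContinuousOn.div continuousOn_const
      · fun_prop
      · intro t ht
        have : (0:ℝ) < t := lt_of_lt_of_le one_pos ht.1
        positivity
    exact (hcont.integrableOn_Icc).mono_set Set.Ioo_subset_Icc_self
  -- integral of f is 1
  have hfint1 : ∫ y, f y = 1 := by
    rw [hfind, MeasureTheory.integral_indicator measurableSet_Ioo]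
    have : ∫ y in Set.Ioo (1:ℝ) b, 1 / (y * Real.log b)
        = ∫ y in (1:ℝ)..b, 1 / (y * Real.log b) := by
      rw [intervalIntegral.integral_of_le hb1.le, MeasureTheory.integral_Ioc_eq_integral_Ioo]
    rw [this]
    have : ∀ y : ℝ, 1 / (y * Real.log b) = y⁻¹ * (Real.log b)⁻¹ := by
      intro y; rw [one_div, mul_inv]
    simp_rw [this]
    rw [intervalIntegral.integral_mul_const, integral_inv_of_pos one_pos hb0]
    rw [div_one]
    exact mul_inv_cancel₀ (ne_of_gt hlog0)
  intro x hx
  rw [hh]; dsimp only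
  -- bound f t ≤ 1 / log b
  have hfle : ∀ t, f t ≤ 1 / Real.log b := by
    intro t; rw [hf]; dsimp only
    split_ifs with ht
    · apply one_div_le_one_div_of_le hlog0
      nlinarith [ht.1]
    · positivity
  -- bound 1 : integral ≤ 1
  have hbound1 : (∫ y, f (x + y) * f y) ≤ 1 := by
    have : (∫ y, f (x + y) * f y) ≤ ∫ y, (1 / Real.log b) * f y := by
      apply integral_mono_of_nonneg
      · filter_upwards with y; exact mul_nonneg (hf0 _) (hf0 _)
      · exact hfInt.const_mul _
      · filter_upwards with y
        exact mul_le_mul_of_nonneg_right (hfle _) (hf0 _)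
    rw [MeasureTheory.integral_const_mul, hfint1, mul_one] at this
    calc (∫ y, f (x + y) * f y) ≤ 1 / Real.log b := this
      _ ≤ 1 := by rw [div_le_one hlog0]; linarith
  -- bound 2 : integral ≤ 1/|x|
  have hbound2 : (∫ y, f (x + y) * f y) ≤ 1 / |x| := by
    rcases hx.lt_or_gt with hxneg | hxpos
    · -- x < 0 : dominate by (1/(-x * log b)) * f (x + y)
      have key : ∀ y, f (x + y) * f y ≤ (1 / (-x * Real.log b)) * f (x + y) := by
        intro y
        by_cases hfy : f (x + y) = 0
        · rw [hfy]; simp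
        · rw [mul_comm]
          apply mul_le_mul_of_nonneg_right _ (hf0 _)
          have hxy1 : 1 < x + y := by
            by_contra hc
            apply hfy; rw [hf]; dsimp only
            rw [if_neg]; intro hcond; exact hc hcond.1
          -- so y > 1 - x > -x
          rw [hf]; dsimp only
          split_ifs with ht
          · apply one_div_le_one_div_of_le (by nlinarith)
            nlinarith [ht.1]
          · exact div_nonneg zero_le_one (by nlinarith)
      have hintshift : Integrable (fun y => f (x + y)) := hfInt.comp_add_left x
      have : (∫ y, f (x + y) * f y) ≤ ∫ y, (1 / (-x * Real.log b)) * f (x + y) := by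
        apply integral_mono_of_nonneg
        · filter_upwards with y; exact mul_nonneg (hf0 _) (hf0 _)
        · exact hintshift.const_mul _
        · filter_upwards with y; exact key y
      rw [MeasureTheory.integral_const_mul] at this
      have hshift : (∫ y, f (x + y)) = 1 := by
        rw [MeasureTheory.integral_add_left_eq_self f x, hfint1]
      rw [hshift, mul_one] at this
      have habs : |x| = -x := abs_of_neg hxneg
      calc (∫ y, f (x + y) * f y) ≤ 1 / (-x * Real.log b) := this
        _ ≤ 1 / |x| := by
            rw [habs]
            apply one_div_le_one_div_of_le (by linarith)
            nlinarith
    · -- x > 0 : dominate by (1/(x * log b)) * f y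
      have key : ∀ y, f (x + y) * f y ≤ (1 / (x * Real.log b)) * f y := by
        intro y
        by_cases hfy : f y = 0
        · rw [hfy]; simp
        · apply mul_le_mul_of_nonneg_right _ (hf0 _)
          have hy1 : 1 < y := by
            by_contra hc
            apply hfy; rw [hf]; dsimp only
            rw [if_neg]; intro hcond; exact hc hcond.1
          rw [hf]; dsimp only
          split_ifs with ht
          · apply one_div_le_one_div_of_le (by positivity)
            nlinarith
          · positivity
      have : (∫ y, f (x + y) * f y) ≤ ∫ y, (1 / (x * Real.log b)) * f y := by
        apply integral_mono_of_nonneg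
        · filter_upwards with y; exact mul_nonneg (hf0 _) (hf0 _)
        · exact hfInt.const_mul _
        · filter_upwards with y; exact key y
      rw [MeasureTheory.integral_const_mul, hfint1, mul_one] at this
      have habs : |x| = x := abs_of_pos hxpos
      calc (∫ y, f (x + y) * f y) ≤ 1 / (x * Real.log b) := this
        _ ≤ 1 / |x| := by
            rw [habs]
            apply one_div_le_one_div_of_le hxpos
            nlinarith
  exact le_min hbound1 hbound2
end
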